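/- arXiv:2405.07929 — 5 statements merged into one kernel-verified Lean document; each statement's English description precedes it below -/
import Mathlib

section
/- Let d ≥ 2, 0 < α < d, and n ∈ ℕ, and set k := ⌊d/2⌋ + 1. Then there exists a constant C > 0, depending only on d, α and n, with the following property: if φ, ψ : ℝ^d → ℂ are measurable functions such that p_m(|·|^α φ) := sup_{ξ}(1+|ξ|²)^m |ξ|^α |φ(ξ)| and p_m(|·|^α ψ) := sup_{ξ}(1+|ξ|²)^m |ξ|^α |ψ(ξ)| are finite for every m ∈ ℕ, then for every ξ ∈ ℝ^d, (1+|ξ|²)^n |ξ|^α |(φ∗ψ)(ξ)| ≤ C·( p_n(|·|^α φ)·p_{n+k}(|·|^α ψ) + p_{n+k}(|·|^α φ)·p_n(|·|^α ψ) ). -/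
/-!
Split the convolution integral according to which of `‖ξ - η‖`, `‖η‖` is larger. Where
`‖η‖ ≤ ‖ξ - η‖` we have `‖ξ‖ ≤ 2‖ξ - η‖`, so the weight `(1 + ‖ξ‖²)ⁿ ‖ξ‖^α` is at most
`4ⁿ 2^α` times the weight at `ξ - η`, which `p_n(|·|^α φ)` absorbs, while
`|ψ η| ≤ p_{n+k}(|·|^α ψ) (1 + ‖η‖²)⁻ᵏ ‖η‖^(-α)`. This kernel is integrable: near the origin
because `α < d`, at infinity because `2k > d`. The other region is symmetric.
-/

open MeasureTheory

/-- The weighted supremum seminorm `p_m(|·|^α φ) = sup_ξ (1+|ξ|²)^m |ξ|^α |φ(ξ)|`. -/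
noncomputable def weightedSup (d : ℕ) (α : ℝ) (m : ℕ)
    (φ : EuclideanSpace ℝ (Fin d) → ℂ) : ℝ :=
  ⨆ ξ : EuclideanSpace ℝ (Fin d), (1 + ‖ξ‖ ^ 2) ^ m * (‖ξ‖ ^ α * ‖φ ξ‖)

open Metric Set

section Weight

variable {E : Type*} [NormedAddCommGroup E] {α : ℝ}

noncomputable def weight (n : ℕ) (α : ℝ) (x : E) : ℝ := (1 + ‖x‖ ^ 2) ^ n * ‖x‖ ^ α

lemma weight_nonneg (n : ℕ) (α : ℝ) (x : E) : 0 ≤ weight n α x := by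
  unfold weight; positivity

lemma weight_pos (n : ℕ) (α : ℝ) {x : E} (hx : x ≠ 0) : 0 < weight n α x := by
  have := norm_pos_iff.2 hx
  unfold weight; positivity

lemma weight_le_weight (α : ℝ) (x : E) {k n : ℕ} (hkn : k ≤ n) : weight k α x ≤ weight n α x :=
  mul_le_mul_of_nonneg_right (pow_le_pow_right₀ (le_add_of_nonneg_right (sq_nonneg _)) hkn)
    (by positivity)

lemma weight_le_of_norm_le_two_mul (hα : 0 ≤ α) (n : ℕ) {x y : E} (hxy : ‖x‖ ≤ 2 * ‖y‖) :
    weight n α x ≤ 4 ^ n * 2 ^ α * weight n α y := by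
  have hsq : 1 + ‖x‖ ^ 2 ≤ 4 * (1 + ‖y‖ ^ 2) := by nlinarith [norm_nonneg x]
  have hrpow : ‖x‖ ^ α ≤ 2 ^ α * ‖y‖ ^ α := by
    rw [← Real.mul_rpow zero_le_two (norm_nonneg y)]
    exact Real.rpow_le_rpow (norm_nonneg x) hxy hα
  calc weight n α x ≤ (4 * (1 + ‖y‖ ^ 2)) ^ n * (2 ^ α * ‖y‖ ^ α) := by
        unfold weight; gcongr
    _ = 4 ^ n * 2 ^ α * weight n α y := by rw [weight, mul_pow]; ring

lemma le_mul_inv_weight_of_weight_mul_le {n k : ℕ} {x : E} (hx : x ≠ 0) {u P : ℝ} (hu : 0 ≤ u)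
    (h : weight (n + k) α x * u ≤ P) : u ≤ P * (weight k α x)⁻¹ := by
  rw [le_mul_inv_iff₀' (weight_pos k α hx)]
  exact (mul_le_mul_of_nonneg_right (weight_le_weight α x (Nat.le_add_left k n)) hu).trans h

lemma weight_add_mul_le (hα : 0 ≤ α) {n k : ℕ} {a b : E} (hb : b ≠ 0) (hba : ‖b‖ ≤ ‖a‖)
    {u v A B : ℝ} (hu : 0 ≤ u) (hv : 0 ≤ v)
    (hA : weight n α a * u ≤ A) (hB : weight (n + k) α b * v ≤ B) :
    weight n α (a + b) * (u * v) ≤ 4 ^ n * 2 ^ α * (A * B * (weight k α b)⁻¹) := by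
  have hab : ‖a + b‖ ≤ 2 * ‖a‖ := (norm_add_le a b).trans (by linarith)
  have hv' := le_mul_inv_weight_of_weight_mul_le hb hv hB
  have hA0 : 0 ≤ A := (mul_nonneg (weight_nonneg n α a) hu).trans hA
  calc weight n α (a + b) * (u * v) ≤ 4 ^ n * 2 ^ α * (weight n α a * u) * v := by
        rw [← mul_assoc, ← mul_assoc (4 ^ n * 2 ^ α)]
        gcongr
        exact weight_le_of_norm_le_two_mul hα n hab
    _ ≤ 4 ^ n * 2 ^ α * A * (B * (weight k α b)⁻¹) := by gcongr
    _ = 4 ^ n * 2 ^ α * (A * B * (weight k α b)⁻¹) := by ring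

lemma inv_weight_eq (k : ℕ) (α : ℝ) (x : E) :
    (weight k α x)⁻¹ = ((1 + ‖x‖ ^ 2) ^ k)⁻¹ * ‖x‖ ^ (-α) := by
  rw [weight, mul_inv, Real.rpow_neg (norm_nonneg x)]

end Weight

section Convolution

variable {E R : Type*} [NormedAddCommGroup E] [NormedRing R] {α : ℝ} {n k : ℕ}
  {φ ψ : E → R} {A A' B B' : ℝ}

lemma nonneg_of_weight_mul_norm_le {f : E → R} {P : ℝ} (h : ∀ x, weight n α x * ‖f x‖ ≤ P) :
    0 ≤ P :=
  (mul_nonneg (weight_nonneg n α 0) (norm_nonneg _)).trans (h 0)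

lemma weight_mul_norm_mul_le (hα : 0 ≤ α)
    (hφ : ∀ x, weight n α x * ‖φ x‖ ≤ A) (hφ' : ∀ x, weight (n + k) α x * ‖φ x‖ ≤ A')
    (hψ : ∀ x, weight n α x * ‖ψ x‖ ≤ B) (hψ' : ∀ x, weight (n + k) α x * ‖ψ x‖ ≤ B')
    {ξ η : E} (hη : η ≠ 0) (hξη : ξ - η ≠ 0) :
    weight n α ξ * ‖φ (ξ - η) * ψ η‖ ≤
      4 ^ n * 2 ^ α * (A * B' * (weight k α η)⁻¹ + A' * B * (weight k α (ξ - η))⁻¹) := by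
  refine (mul_le_mul_of_nonneg_left (norm_mul_le _ _) (weight_nonneg n α ξ)).trans ?_
  rcases le_total ‖η‖ ‖ξ - η‖ with h | h
  · have key := weight_add_mul_le hα hη h (norm_nonneg _) (norm_nonneg _) (hφ _) (hψ' η)
    rw [sub_add_cancel] at key
    refine key.trans (mul_le_mul_of_nonneg_left (le_add_of_nonneg_right ?_) (by positivity))
    have := nonneg_of_weight_mul_norm_le hφ'
    have := nonneg_of_weight_mul_norm_le hψ
    have := weight_nonneg k α (ξ - η)
    positivity
  · have key := weight_add_mul_le hα hξη h (norm_nonneg _) (norm_nonneg _) (hψ η) (hφ' _)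
    rw [add_sub_cancel, mul_comm ‖ψ η‖, mul_comm B] at key
    refine key.trans (mul_le_mul_of_nonneg_left (le_add_of_nonneg_left ?_) (by positivity))
    have := nonneg_of_weight_mul_norm_le hφ
    have := nonneg_of_weight_mul_norm_le hψ'
    have := weight_nonneg k α η
    positivity

variable [NormedSpace ℝ R] [MeasurableSpace E] [MeasurableAdd E] [MeasurableNeg E]
  {μ : Measure E} [μ.IsAddLeftInvariant] [μ.IsNegInvariant] [NullSingletonClass μ]

lemma weight_mul_norm_convolution_le (hα : 0 ≤ α)
    (hint : Integrable (fun x ↦ (weight k α x)⁻¹) μ)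
    (hφ : ∀ x, weight n α x * ‖φ x‖ ≤ A) (hφ' : ∀ x, weight (n + k) α x * ‖φ x‖ ≤ A')
    (hψ : ∀ x, weight n α x * ‖ψ x‖ ≤ B) (hψ' : ∀ x, weight (n + k) α x * ‖ψ x‖ ≤ B') (ξ : E) :
    weight n α ξ * ‖∫ η, φ (ξ - η) * ψ η ∂μ‖ ≤
      4 ^ n * 2 ^ α * (∫ x, (weight k α x)⁻¹ ∂μ) * (A * B' + A' * B) := by
  have hmajorant : Integrable (fun η ↦ 4 ^ n * 2 ^ α *
      (A * B' * (weight k α η)⁻¹ + A' * B * (weight k α (ξ - η))⁻¹)) μ :=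
    ((hint.const_mul _).add ((hint.comp_sub_left ξ).const_mul _)).const_mul _
  -- at `η = 0` and `η = ξ` the kernel takes the junk value `0⁻¹ = 0`
  have hae : ∀ᵐ η ∂μ, η ≠ 0 ∧ ξ - η ≠ 0 := by
    have hnull : μ {0, ξ} = 0 := ((finite_singleton ξ).insert 0).measure_zero μ
    filter_upwards [measure_eq_zero_iff_ae_notMem.1 hnull] with η hη
    simp only [mem_insert_iff, mem_singleton_iff, not_or] at hη
    exact ⟨hη.1, sub_ne_zero.2 (Ne.symm hη.2)⟩
  calc weight n α ξ * ‖∫ η, φ (ξ - η) * ψ η ∂μ‖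
      ≤ weight n α ξ * ∫ η, ‖φ (ξ - η) * ψ η‖ ∂μ := by
        gcongr
        · exact weight_nonneg n α ξ
        · exact norm_integral_le_integral_norm _
    _ = ∫ η, weight n α ξ * ‖φ (ξ - η) * ψ η‖ ∂μ := (integral_const_mul _ _).symm
    _ ≤ ∫ η, 4 ^ n * 2 ^ α *
          (A * B' * (weight k α η)⁻¹ + A' * B * (weight k α (ξ - η))⁻¹) ∂μ := by
        refine integral_mono_of_nonneg
          (ae_of_all _ fun η ↦ mul_nonneg (weight_nonneg n α ξ) (norm_nonneg _)) hmajorant ?_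
        filter_upwards [hae] with η hη
        exact weight_mul_norm_mul_le hα hφ hφ' hψ hψ' hη.1 hη.2
    _ = 4 ^ n * 2 ^ α * (∫ x, (weight k α x)⁻¹ ∂μ) * (A * B' + A' * B) := by
        rw [integral_const_mul,
          integral_add (hint.const_mul _) ((hint.comp_sub_left ξ).const_mul _),
          integral_const_mul, integral_const_mul,
          integral_sub_left_eq_self (fun x ↦ (weight k α x)⁻¹) μ ξ]
        ring

end Convolution

section Integrability

variable {E : Type*} [NormedAddCommGroup E] [MeasurableSpace E] {μ : Measure E} {α : ℝ} {k : ℕ}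

lemma integral_inv_weight_pos [Nontrivial E] [μ.IsOpenPosMeasure]
    (hint : Integrable (fun x : E ↦ (weight k α x)⁻¹) μ) : 0 < ∫ x, (weight k α x)⁻¹ ∂μ := by
  rw [integral_pos_iff_support_of_nonneg (fun x ↦ inv_nonneg.2 (weight_nonneg k α x)) hint]
  refine (isOpen_compl_singleton.measure_pos μ (exists_ne 0)).trans_le (measure_mono fun x hx ↦ ?_)
  exact inv_ne_zero (weight_pos k α hx).ne'

variable [NormedSpace ℝ E] [FiniteDimensional ℝ E] [BorelSpace E] [μ.IsAddHaarMeasure]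

lemma integrable_inv_one_add_norm_sq_pow (hk : Module.finrank ℝ E < 2 * k) :
    Integrable (fun x : E ↦ ((1 + ‖x‖ ^ 2) ^ k)⁻¹) μ := by
  have hr : (Module.finrank ℝ E : ℝ) < (2 * k : ℕ) := by exact_mod_cast hk
  refine (integrable_rpow_neg_one_add_norm_sq hr).congr (ae_of_all _ fun x ↦ ?_)
  have : -((2 * k : ℕ) : ℝ) / 2 = -(k : ℝ) := by push_cast; ring
  simp only [this, Real.rpow_neg (by positivity : (0 : ℝ) ≤ 1 + ‖x‖ ^ 2), Real.rpow_natCast]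

lemma integrable_inv_weight (hα0 : 0 ≤ α) (hαd : α < Module.finrank ℝ E)
    (hk : Module.finrank ℝ E < 2 * k) :
    Integrable (fun x : E ↦ (weight k α x)⁻¹) μ := by
  have hd : 1 ≤ Module.finrank ℝ E := by
    have : (0 : ℝ) < Module.finrank ℝ E := hα0.trans_lt hαd
    exact_mod_cast this
  have hmeas : AEStronglyMeasurable (fun x : E ↦ (weight k α x)⁻¹) μ := by
    unfold weight
    fun_prop
  have hball : IntegrableOn (fun x : E ↦ (weight k α x)⁻¹) (ball 0 1) μ := by
    refine integrableOn_ball_of_norm_le_rpow (C := 1) hd hαd (ae_of_all _ fun x ↦ ?_) hmeas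
    rw [inv_weight_eq, Real.norm_eq_abs, abs_of_nonneg (by positivity)]
    gcongr
    exact inv_le_one_of_one_le₀ (one_le_pow₀ (le_add_of_nonneg_right (sq_nonneg _)))
  have hout : IntegrableOn (fun x : E ↦ (weight k α x)⁻¹) (ball 0 1)ᶜ μ := by
    refine (integrable_inv_one_add_norm_sq_pow hk).integrableOn.mono' hmeas.restrict
      (ae_restrict_of_forall_mem measurableSet_ball.compl fun x hx ↦ ?_)
    have hx : 1 ≤ ‖x‖ := by simpa using hx
    rw [inv_weight_eq, Real.norm_eq_abs, abs_of_nonneg (by positivity)]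
    exact mul_le_of_le_one_right (by positivity)
      (Real.rpow_le_one_of_one_le_of_nonpos hx (neg_nonpos.2 hα0))
  simpa using hball.union hout

end Integrability

lemma weight_mul_norm_le_weightedSup {d : ℕ} {α : ℝ} {m : ℕ} {φ : EuclideanSpace ℝ (Fin d) → ℂ}
    (h : BddAbove (range fun ξ : EuclideanSpace ℝ (Fin d) ↦ (1 + ‖ξ‖ ^ 2) ^ m * (‖ξ‖ ^ α * ‖φ ξ‖)))
    (ξ : EuclideanSpace ℝ (Fin d)) : weight m α ξ * ‖φ ξ‖ ≤ weightedSup d α m φ :=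
  (mul_assoc _ _ _).trans_le (le_ciSup h ξ)

theorem convolution_weighted_bound_same_alpha_general (d : ℕ) (α : ℝ)
    (hα0 : 0 < α) (hαd : α < d) (n : ℕ) :
    ∃ C : ℝ, 0 < C ∧
      ∀ φ ψ : EuclideanSpace ℝ (Fin d) → ℂ, Measurable φ → Measurable ψ →
        (∀ m : ℕ, BddAbove (Set.range fun ξ : EuclideanSpace ℝ (Fin d) =>
          (1 + ‖ξ‖ ^ 2) ^ m * (‖ξ‖ ^ α * ‖φ ξ‖))) →
        (∀ m : ℕ, BddAbove (Set.range fun ξ : EuclideanSpace ℝ (Fin d) =>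
          (1 + ‖ξ‖ ^ 2) ^ m * (‖ξ‖ ^ α * ‖ψ ξ‖))) →
        ∀ ξ : EuclideanSpace ℝ (Fin d),
          (1 + ‖ξ‖ ^ 2) ^ n * (‖ξ‖ ^ α * ‖∫ η, φ (ξ - η) * ψ η‖) ≤
            C * (weightedSup d α n φ * weightedSup d α (n + d / 2 + 1) ψ +
              weightedSup d α (n + d / 2 + 1) φ * weightedSup d α n ψ) := by
  have hdim : Module.finrank ℝ (EuclideanSpace ℝ (Fin d)) = d := finrank_euclideanSpace_fin
  have : Nontrivial (EuclideanSpace ℝ (Fin d)) :=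
    Module.nontrivial_of_finrank_pos (R := ℝ) (by rw [hdim]; exact_mod_cast hα0.trans hαd)
  have hint : Integrable fun x : EuclideanSpace ℝ (Fin d) ↦ (weight (d / 2 + 1) α x)⁻¹ :=
    integrable_inv_weight hα0.le (by rwa [hdim]) (by omega)
  refine ⟨4 ^ n * 2 ^ α * ∫ x, (weight (d / 2 + 1) α x)⁻¹,
    mul_pos (by positivity) (integral_inv_weight_pos hint), ?_⟩
  intro φ ψ _ _ hφ hψ ξ
  rw [← mul_assoc]
  exact weight_mul_norm_convolution_le hα0.le hint
    (weight_mul_norm_le_weightedSup (hφ _)) (weight_mul_norm_le_weightedSup (hφ _))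
    (weight_mul_norm_le_weightedSup (hψ _)) (weight_mul_norm_le_weightedSup (hψ _)) ξ

theorem convolution_weighted_bound_same_alpha (d : ℕ) (hd : 2 ≤ d) (α : ℝ)
    (hα0 : 0 < α) (hαd : α < d) (n : ℕ) :
    ∃ C : ℝ, 0 < C ∧
      ∀ φ ψ : EuclideanSpace ℝ (Fin d) → ℂ, Measurable φ → Measurable ψ →
        (∀ m : ℕ, BddAbove (Set.range fun ξ : EuclideanSpace ℝ (Fin d) =>
          (1 + ‖ξ‖ ^ 2) ^ m * (‖ξ‖ ^ α * ‖φ ξ‖))) →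
        (∀ m : ℕ, BddAbove (Set.range fun ξ : EuclideanSpace ℝ (Fin d) =>
          (1 + ‖ξ‖ ^ 2) ^ m * (‖ξ‖ ^ α * ‖ψ ξ‖))) →
        ∀ ξ : EuclideanSpace ℝ (Fin d),
          (1 + ‖ξ‖ ^ 2) ^ n * (‖ξ‖ ^ α * ‖∫ η, φ (ξ - η) * ψ η‖) ≤
            C * (weightedSup d α n φ * weightedSup d α (n + d / 2 + 1) ψ +
              weightedSup d α (n + d / 2 + 1) φ * weightedSup d α n ψ) :=
  convolution_weighted_bound_same_alpha_general d α hα0 hαd n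
end

section
/- Let d ≥ 2, let α, β ≥ 0 with α + β < d, and let n ∈ ℕ; set k := ⌊d/2⌋ + 1. Then there exists a constant C > 0, depending only on d, α, β and n, with the following property: if φ, ψ : ℝ^d → ℂ are measurable functions such that p_m(|·|^α φ) := sup_{ξ}(1+|ξ|²)^m |ξ|^α |φ(ξ)| and p_m(|·|^β ψ) := sup_{ξ}(1+|ξ|²)^m |ξ|^β |ψ(ξ)| are finite for every m ∈ ℕ, then for every ξ ∈ ℝ^d, (1+|ξ|²)^n |(φ∗ψ)(ξ)| ≤ C·( p_n(|·|^α φ)·p_{n+k}(|·|^β ψ) + p_{n+k}(|·|^α φ)·p_n(|·|^β ψ) ). -/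
/-!
Peetre's inequality `1 + |ξ|² ≤ 2 (1 + |ξ - η|²)(1 + |η|²)` splits the weight between the two
factors of the integrand. Of the two points `ξ - η` and `η`, the one closer to the origin carries
both singularities `|·|^(-α)` and `|·|^(-β)`, and `k = ⌊d/2⌋ + 1` further powers of decay of the
factor evaluated there. The integrand is thus dominated by translates of
`|x|^(-(α+β)) (1 + |x|²)^(-k)`, which is integrable because `α + β < d < 2k`.
-/

open MeasureTheory Set Metric Module

section SingularWeight

variable {E : Type*} [NormedAddCommGroup E]

noncomputable def singularWeight (γ : ℝ) (k : ℕ) (x : E) : ℝ :=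
  ‖x‖ ^ (-γ) * ((1 + ‖x‖ ^ 2) ^ k)⁻¹

lemma singularWeight_nonneg (γ : ℝ) (k : ℕ) (x : E) : 0 ≤ singularWeight γ k x := by
  unfold singularWeight
  positivity

variable [NormedSpace ℝ E] [FiniteDimensional ℝ E] [MeasurableSpace E] [BorelSpace E]
  {μ : Measure E} [μ.IsAddHaarMeasure]

theorem integrable_singularWeight {γ : ℝ} {k : ℕ} (hγ₀ : 0 ≤ γ) (hγ : γ < finrank ℝ E)
    (hk : (finrank ℝ E : ℝ) < 2 * k) : Integrable (singularWeight γ k) μ := by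
  have hmeas : AEStronglyMeasurable (singularWeight γ k) μ := by
    unfold singularWeight
    fun_prop (disch := intro x; positivity)
  rw [← integrableOn_univ, ← union_compl_self (ball (0 : E) 1)]
  refine .union ?_ ?_
  · have hdim : 0 < finrank ℝ E := by exact_mod_cast hγ₀.trans_lt hγ
    refine integrableOn_ball_of_norm_le_rpow (C := 1) hdim hγ
      (ae_of_all _ fun x => ?_) hmeas
    rw [Real.norm_of_nonneg (singularWeight_nonneg γ k x), one_mul]
    exact mul_le_of_le_one_right (by positivity)
      (inv_le_one_of_one_le₀ (one_le_pow₀ (le_add_of_nonneg_right (by positivity))))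
  · refine (integrable_rpow_neg_one_add_norm_sq hk).integrableOn.mono' hmeas.restrict
      (ae_restrict_of_forall_mem measurableSet_ball.compl fun x hx => ?_)
    have hx₁ : 1 ≤ ‖x‖ := by simpa using hx
    rw [Real.norm_of_nonneg (singularWeight_nonneg γ k x), show -(2 * k : ℝ) / 2 = -k by ring,
      Real.rpow_neg (by positivity), Real.rpow_natCast]
    exact mul_le_of_le_one_left (by positivity)
      (Real.rpow_le_one_of_one_le_of_nonpos hx₁ (neg_nonpos.2 hγ₀))

lemma integral_mul_add_mul_comp_sub {g : E → ℝ} (hg : Integrable g μ) (P Q : ℝ) (ξ : E) :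
    ∫ η, (P * g η + Q * g (ξ - η)) ∂μ = (P + Q) * ∫ η, g η ∂μ := by
  rw [integral_add (hg.const_mul _) ((hg.comp_sub_left ξ).const_mul _), integral_const_mul,
    integral_const_mul, integral_sub_left_eq_self]
  ring

end SingularWeight

lemma mul_norm_integral_le_of_ae_le {X F : Type*} [MeasurableSpace X] {μ : Measure X}
    [NormedAddCommGroup F] [NormedSpace ℝ F] {f : X → F} {G : X → ℝ} {c : ℝ} (hc : 0 ≤ c)
    (hG : Integrable G μ) (h : ∀ᵐ x ∂μ, c * ‖f x‖ ≤ G x) :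
    c * ‖∫ x, f x ∂μ‖ ≤ ∫ x, G x ∂μ :=
  calc c * ‖∫ x, f x ∂μ‖ ≤ c * ∫ x, ‖f x‖ ∂μ := by gcongr; exact norm_integral_le_integral_norm _
    _ = ∫ x, c * ‖f x‖ ∂μ := (integral_const_mul _ _).symm
    _ ≤ ∫ x, G x ∂μ := integral_mono_of_nonneg (ae_of_all _ fun _ => by positivity) hG h

lemma one_add_norm_add_sq_le {E : Type*} [SeminormedAddCommGroup E] (x y : E) :
    1 + ‖x + y‖ ^ 2 ≤ 2 * ((1 + ‖x‖ ^ 2) * (1 + ‖y‖ ^ 2)) := by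
  nlinarith [norm_add_le x y, norm_nonneg (x + y), sq_nonneg (‖x‖ - ‖y‖), sq_nonneg (‖x‖ * ‖y‖)]

lemma one_add_norm_add_sq_pow_le {E : Type*} [SeminormedAddCommGroup E] (x y : E) (n : ℕ) :
    (1 + ‖x + y‖ ^ 2) ^ n ≤ 2 ^ n * ((1 + ‖x‖ ^ 2) ^ n * (1 + ‖y‖ ^ 2) ^ n) := by
  rw [← mul_pow, ← mul_pow]
  exact pow_le_pow_left₀ (by positivity) (one_add_norm_add_sq_le x y) n

section WeightedSup

variable {d : ℕ} {α : ℝ} {m : ℕ} {φ : EuclideanSpace ℝ (Fin d) → ℂ}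

lemma weightedSup_nonneg : 0 ≤ weightedSup d α m φ :=
  Real.iSup_nonneg fun _ => by positivity

lemma mul_norm_le_weightedSup_mul_rpow_neg
    (hφ : BddAbove (range fun ξ : EuclideanSpace ℝ (Fin d) => (1 + ‖ξ‖ ^ 2) ^ m * (‖ξ‖ ^ α * ‖φ ξ‖)))
    {ξ : EuclideanSpace ℝ (Fin d)} (hξ : ξ ≠ 0) :
    (1 + ‖ξ‖ ^ 2) ^ m * ‖φ ξ‖ ≤ weightedSup d α m φ * ‖ξ‖ ^ (-α) := by
  have hξ₀ : 0 < ‖ξ‖ := norm_pos_iff.2 hξ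
  rw [Real.rpow_neg hξ₀.le, ← div_eq_mul_inv, le_div_iff₀ (by positivity)]
  calc (1 + ‖ξ‖ ^ 2) ^ m * ‖φ ξ‖ * ‖ξ‖ ^ α = (1 + ‖ξ‖ ^ 2) ^ m * (‖ξ‖ ^ α * ‖φ ξ‖) := by ring
    _ ≤ weightedSup d α m φ := le_ciSup hφ ξ

end WeightedSup

section Convolution

variable {d : ℕ} {α β : ℝ} {n k : ℕ} {φ ψ : EuclideanSpace ℝ (Fin d) → ℂ}

lemma weighted_mul_le_of_norm_le (hα : 0 ≤ α)
    (hφ : BddAbove (range fun ξ : EuclideanSpace ℝ (Fin d) => (1 + ‖ξ‖ ^ 2) ^ n * (‖ξ‖ ^ α * ‖φ ξ‖)))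
    (hψ : BddAbove (range fun ξ : EuclideanSpace ℝ (Fin d) =>
      (1 + ‖ξ‖ ^ 2) ^ (n + k) * (‖ξ‖ ^ β * ‖ψ ξ‖)))
    {x y : EuclideanSpace ℝ (Fin d)} (hx : x ≠ 0) (hy : y ≠ 0) (hyx : ‖y‖ ≤ ‖x‖) :
    (1 + ‖x‖ ^ 2) ^ n * ‖φ x‖ * ((1 + ‖y‖ ^ 2) ^ n * ‖ψ y‖) ≤
      weightedSup d α n φ * weightedSup d β (n + k) ψ * singularWeight (α + β) k y := by
  have hy₀ : 0 < ‖y‖ := norm_pos_iff.2 hy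
  have hφx := mul_norm_le_weightedSup_mul_rpow_neg hφ hx
  have hψy : (1 + ‖y‖ ^ 2) ^ n * ‖ψ y‖ ≤
      weightedSup d β (n + k) ψ * ‖y‖ ^ (-β) * ((1 + ‖y‖ ^ 2) ^ k)⁻¹ := by
    rw [le_mul_inv_iff₀ (by positivity)]
    calc (1 + ‖y‖ ^ 2) ^ n * ‖ψ y‖ * (1 + ‖y‖ ^ 2) ^ k = (1 + ‖y‖ ^ 2) ^ (n + k) * ‖ψ y‖ := by
          ring
      _ ≤ _ := mul_norm_le_weightedSup_mul_rpow_neg hψ hy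
  have hφy : (1 + ‖x‖ ^ 2) ^ n * ‖φ x‖ ≤ weightedSup d α n φ * ‖y‖ ^ (-α) :=
    hφx.trans (mul_le_mul_of_nonneg_left
      (Real.rpow_le_rpow_of_nonpos hy₀ hyx (neg_nonpos.2 hα)) weightedSup_nonneg)
  calc _ ≤ weightedSup d α n φ * ‖y‖ ^ (-α) *
        (weightedSup d β (n + k) ψ * ‖y‖ ^ (-β) * ((1 + ‖y‖ ^ 2) ^ k)⁻¹) :=
        mul_le_mul hφy hψy (by positivity) (mul_nonneg weightedSup_nonneg (by positivity))
    _ = _ := by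
      rw [singularWeight, neg_add, Real.rpow_add hy₀]
      ring

lemma convolution_integrand_le (hα : 0 ≤ α) (hβ : 0 ≤ β)
    (hφ : ∀ m : ℕ, BddAbove (range fun ξ : EuclideanSpace ℝ (Fin d) =>
      (1 + ‖ξ‖ ^ 2) ^ m * (‖ξ‖ ^ α * ‖φ ξ‖)))
    (hψ : ∀ m : ℕ, BddAbove (range fun ξ : EuclideanSpace ℝ (Fin d) =>
      (1 + ‖ξ‖ ^ 2) ^ m * (‖ξ‖ ^ β * ‖ψ ξ‖)))
    {ξ η : EuclideanSpace ℝ (Fin d)} (hη : η ≠ 0) (hηξ : η ≠ ξ) :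
    (1 + ‖ξ‖ ^ 2) ^ n * ‖φ (ξ - η) * ψ η‖ ≤
      2 ^ n * (weightedSup d α n φ * weightedSup d β (n + k) ψ * singularWeight (α + β) k η +
        weightedSup d α (n + k) φ * weightedSup d β n ψ * singularWeight (α + β) k (ξ - η)) := by
  have hξη : ξ - η ≠ 0 := sub_ne_zero.2 hηξ.symm
  have hpeetre := one_add_norm_add_sq_pow_le (ξ - η) η n
  rw [sub_add_cancel] at hpeetre
  have hnear : 0 ≤ weightedSup d α n φ * weightedSup d β (n + k) ψ * singularWeight (α + β) k η :=
    mul_nonneg (mul_nonneg weightedSup_nonneg weightedSup_nonneg) (singularWeight_nonneg _ _ _)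
  have hfar : 0 ≤ weightedSup d α (n + k) φ * weightedSup d β n ψ *
      singularWeight (α + β) k (ξ - η) :=
    mul_nonneg (mul_nonneg weightedSup_nonneg weightedSup_nonneg) (singularWeight_nonneg _ _ _)
  calc (1 + ‖ξ‖ ^ 2) ^ n * ‖φ (ξ - η) * ψ η‖
      ≤ 2 ^ n * ((1 + ‖ξ - η‖ ^ 2) ^ n * (1 + ‖η‖ ^ 2) ^ n) * (‖φ (ξ - η)‖ * ‖ψ η‖) := by
        rw [norm_mul]
        gcongr
    _ = 2 ^ n * ((1 + ‖ξ - η‖ ^ 2) ^ n * ‖φ (ξ - η)‖ * ((1 + ‖η‖ ^ 2) ^ n * ‖ψ η‖)) := by ring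
    _ ≤ _ := by
      refine mul_le_mul_of_nonneg_left ?_ (by positivity)
      rcases le_total ‖η‖ ‖ξ - η‖ with h | h
      · exact (weighted_mul_le_of_norm_le hα (hφ n) (hψ _) hξη hη h).trans
          (le_add_of_nonneg_right hfar)
      · have := weighted_mul_le_of_norm_le hβ (hψ n) (hφ (n + k)) hη hξη h
        rw [add_comm β α] at this
        linarith

end Convolution

theorem convolution_weighted_bound_two_exponents_general (d : ℕ) (α β : ℝ)
    (hα : 0 ≤ α) (hβ : 0 ≤ β) (hαβ : α + β < d) (n : ℕ) :
    ∃ C : ℝ, 0 < C ∧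
      ∀ φ ψ : EuclideanSpace ℝ (Fin d) → ℂ, Measurable φ → Measurable ψ →
        (∀ m : ℕ, BddAbove (Set.range fun ξ : EuclideanSpace ℝ (Fin d) =>
          (1 + ‖ξ‖ ^ 2) ^ m * (‖ξ‖ ^ α * ‖φ ξ‖))) →
        (∀ m : ℕ, BddAbove (Set.range fun ξ : EuclideanSpace ℝ (Fin d) =>
          (1 + ‖ξ‖ ^ 2) ^ m * (‖ξ‖ ^ β * ‖ψ ξ‖))) →
        ∀ ξ : EuclideanSpace ℝ (Fin d),
          (1 + ‖ξ‖ ^ 2) ^ n * ‖∫ η, φ (ξ - η) * ψ η‖ ≤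
            C * (weightedSup d α n φ * weightedSup d β (n + d / 2 + 1) ψ +
              weightedSup d α (n + d / 2 + 1) φ * weightedSup d β n ψ) := by
  set k := d / 2 + 1
  have hd : 0 < d := by exact_mod_cast (add_nonneg hα hβ).trans_lt hαβ
  have : Nontrivial (EuclideanSpace ℝ (Fin d)) :=
    Module.nontrivial_of_finrank_pos (R := ℝ) (by rwa [finrank_euclideanSpace_fin])
  have hg : Integrable (singularWeight (α + β) k : EuclideanSpace ℝ (Fin d) → ℝ) := by
    refine integrable_singularWeight (add_nonneg hα hβ) ?_ ?_ <;>
      rw [finrank_euclideanSpace_fin]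
    · exact hαβ
    · exact_mod_cast (by omega : d < 2 * k)
  set I := ∫ x : EuclideanSpace ℝ (Fin d), singularWeight (α + β) k x
  have hI : 0 ≤ I := integral_nonneg (singularWeight_nonneg _ _)
  refine ⟨2 ^ n * (I + 1), by positivity, fun φ ψ _ _ hφ hψ ξ => ?_⟩
  set P := weightedSup d α n φ * weightedSup d β (n + k) ψ
  set Q := weightedSup d α (n + k) φ * weightedSup d β n ψ
  have hPQ : 0 ≤ P + Q := add_nonneg (mul_nonneg weightedSup_nonneg weightedSup_nonneg)
    (mul_nonneg weightedSup_nonneg weightedSup_nonneg)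
  calc (1 + ‖ξ‖ ^ 2) ^ n * ‖∫ η, φ (ξ - η) * ψ η‖
      ≤ ∫ η, 2 ^ n * (P * singularWeight (α + β) k η + Q * singularWeight (α + β) k (ξ - η)) :=
        mul_norm_integral_le_of_ae_le (by positivity)
          (((hg.const_mul _).add ((hg.comp_sub_left ξ).const_mul _)).const_mul _)
          (by filter_upwards [Measure.ae_ne volume 0, Measure.ae_ne volume ξ] with η h₀ hξ
              using convolution_integrand_le hα hβ hφ hψ h₀ hξ)
    _ = 2 ^ n * I * (P + Q) := by
        rw [integral_const_mul, integral_mul_add_mul_comp_sub hg]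
        ring
    _ ≤ 2 ^ n * (I + 1) * (P + Q) := by gcongr; linarith

theorem convolution_weighted_bound_two_exponents (d : ℕ) (hd : 2 ≤ d) (α β : ℝ)
    (hα : 0 ≤ α) (hβ : 0 ≤ β) (hαβ : α + β < d) (n : ℕ) :
    ∃ C : ℝ, 0 < C ∧
      ∀ φ ψ : EuclideanSpace ℝ (Fin d) → ℂ, Measurable φ → Measurable ψ →
        (∀ m : ℕ, BddAbove (Set.range fun ξ : EuclideanSpace ℝ (Fin d) =>
          (1 + ‖ξ‖ ^ 2) ^ m * (‖ξ‖ ^ α * ‖φ ξ‖))) →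
        (∀ m : ℕ, BddAbove (Set.range fun ξ : EuclideanSpace ℝ (Fin d) =>
          (1 + ‖ξ‖ ^ 2) ^ m * (‖ξ‖ ^ β * ‖ψ ξ‖))) →
        ∀ ξ : EuclideanSpace ℝ (Fin d),
          (1 + ‖ξ‖ ^ 2) ^ n * ‖∫ η, φ (ξ - η) * ψ η‖ ≤
            C * (weightedSup d α n φ * weightedSup d β (n + d / 2 + 1) ψ +
              weightedSup d α (n + d / 2 + 1) φ * weightedSup d β n ψ) :=
  convolution_weighted_bound_two_exponents_general d α β hα hβ hαβ n
end

section
/- Let d ≥ 2, 0 < α < d, and let p satisfy d/(d−α) < p < d/α, with conjugate exponent p'. Then there exists a constant C > 0, depending only on d, α and p, such that for every k ≥ 2, every f₁, …, f_k ∈ L¹(ℝ^d) ∩ L^p(ℝ^d) ∩ L^{p'}(ℝ^d), every way w of fully parenthesizing a product of k factors (i.e., every element w of the free magma on k generators), and every ξ ∈ ℝ^d with |ξ| ≥ 1, the iterated Riesz convolution satisfies |w^{∗_α}(f₁, …, f_k)(ξ)| ≤ C^{k−2}·∏_{j=1}^k ‖f_j‖_{1⊕p⊕p'}. -/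
open MeasureTheory ENNReal

/-- Evaluation of an element of a free magma in a magma `(β, op)` at the assignment `f`. -/
def magmaEval {α β : Type*} (op : β → β → β) (f : α → β) : FreeMagma α → β
  | .of a => f a
  | .mul x y => op (magmaEval op f x) (magmaEval op f y)

/-- The list of leaves (with multiplicity, left to right) of an element of a free magma. -/
def magmaLeaves {α : Type*} : FreeMagma α → List α
  | .of a => [a]
  | .mul x y => magmaLeaves x ++ magmaLeaves y

/-- The Riesz convolution `(f ∗_α g)(ξ) = (f ∗ g)(ξ) / |ξ|^α`. -/
noncomputable def rieszConv (d : ℕ) (α : ℝ)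
    (f g : EuclideanSpace ℝ (Fin d) → ℂ) : EuclideanSpace ℝ (Fin d) → ℂ :=
  fun ξ => (∫ η, f (ξ - η) * g η) / ((‖ξ‖ ^ α : ℝ) : ℂ)

/-- The norm `‖φ‖_{1⊕p⊕p'} = ‖φ‖_{L¹} + ‖φ‖_{L^p} + ‖φ‖_{L^{p'}}`. -/
noncomputable def triNorm (d : ℕ) (p p' : ℝ≥0∞)
    (f : EuclideanSpace ℝ (Fin d) → ℂ) : ℝ≥0∞ :=
  eLpNorm f 1 volume + eLpNorm f p volume + eLpNorm f p' volume

/-!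
Write `J(ξ) = ∫ |f(ξ - η) g(η)| dη`, so that `|(f ∗_α g)(ξ)| ≤ J(ξ) |ξ|^{-α}`. Hölder gives
`J ≤ ‖f‖_p ‖g‖_{p'}` pointwise and Fubini gives `∫ J = ‖f‖_1 ‖g‖_1`, both at most
`M = ‖f‖_{1⊕p⊕p'} ‖g‖_{1⊕p⊕p'}`. For `1 ≤ r < d/α`, on the unit ball
`|f ∗_α g|^r ≤ M^r |ξ|^{-αr}`, which is integrable there, and off it
`|f ∗_α g|^r ≤ J^r ≤ M^{r-1} J`; hence `‖f ∗_α g‖_r ≤ C_r M`. The constraints on `p` say exactly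
that `p, p' < d/α`, so with `r = 1, p, p'` the norm `‖·‖_{1⊕p⊕p'}` is submultiplicative under
`∗_α` up to a constant `C`, and induction bounds both factors at the root of a monomial. At the
root, `|ξ| ≥ 1` makes `J ≤ ‖·‖_p ‖·‖_{p'}` suffice, which saves one factor of `C`.
-/

open Metric

section NormConv

variable {G 𝕜 : Type*} [NormedField 𝕜] [AddCommGroup G] [MeasurableSpace G]
  [MeasurableAdd₂ G] [MeasurableNeg G] {μ : Measure G} [μ.IsAddLeftInvariant]
  {f g : G → 𝕜}

noncomputable def normConv (μ : Measure G) (f g : G → 𝕜) (x : G) : ℝ≥0∞ :=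
  ∫⁻ y, ‖f (x - y) * g y‖ₑ ∂μ

lemma MeasureTheory.AEStronglyMeasurable.sub_mul_prod [SFinite μ] (hf : AEStronglyMeasurable f μ)
    (hg : AEStronglyMeasurable g μ) :
    AEStronglyMeasurable (fun z : G × G => f (z.1 - z.2) * g z.2) (μ.prod μ) :=
  (hf.comp_quasiMeasurePreserving (quasiMeasurePreserving_sub_of_right_invariant μ μ)).mul
    hg.comp_snd

lemma normConv_le_eLpNorm_mul_eLpNorm [μ.IsNegInvariant] {p q : ℝ≥0∞} [p.HolderConjugate q]
    (hf : AEStronglyMeasurable f μ) (hg : AEStronglyMeasurable g μ) (x : G) :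
    normConv μ f g x ≤ eLpNorm f p μ * eLpNorm g q μ := by
  have hsub := Measure.measurePreserving_sub_left μ x
  calc normConv μ f g x = eLpNorm ((fun y => f (x - y)) • g) 1 μ := by
        simp [normConv, eLpNorm_one_eq_lintegral_enorm]
    _ ≤ eLpNorm (fun y => f (x - y)) p μ * eLpNorm g q μ :=
        eLpNorm_smul_le_mul_eLpNorm hg (hf.comp_measurePreserving hsub)
    _ = eLpNorm f p μ * eLpNorm g q μ := by
        rw [← eLpNorm_comp_measurePreserving hf hsub]; rfl

lemma lintegral_normConv [SFinite μ] (hf : AEStronglyMeasurable f μ)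
    (hg : AEStronglyMeasurable g μ) :
    ∫⁻ x, normConv μ f g x ∂μ = eLpNorm f 1 μ * eLpNorm g 1 μ := by
  simp only [normConv, eLpNorm_one_eq_lintegral_enorm]
  rw [lintegral_lintegral_swap (hf.sub_mul_prod hg).enorm, ← lintegral_const_mul'' _ hg.enorm]
  refine lintegral_congr fun y => ?_
  simp_rw [enorm_mul]
  have hfy : AEMeasurable (fun x => ‖f (x - y)‖ₑ) μ :=
    (hf.comp_measurePreserving (measurePreserving_sub_right μ y)).enorm
  rw [lintegral_mul_const'' _ hfy,
    lintegral_sub_right_eq_self (fun x => ‖f x‖ₑ) y]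

end NormConv

lemma lintegral_ball_ofReal_norm_rpow_neg_lt_top {E : Type*} [NormedAddCommGroup E]
    [NormedSpace ℝ E] [FiniteDimensional ℝ E] [MeasurableSpace E] [BorelSpace E]
    {μ : Measure E} [μ.IsAddHaarMeasure] (hd : 1 ≤ Module.finrank ℝ E) {β : ℝ}
    (hβ : β < Module.finrank ℝ E) (r : ℝ) :
    ∫⁻ x in ball 0 r, ENNReal.ofReal (‖x‖ ^ (-β)) ∂μ < ∞ := by
  refine Integrable.lintegral_lt_top (integrableOn_ball_of_norm_le_rpow (C := 1) hd hβ ?_ ?_)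
  · refine ae_of_all _ fun x => ?_
    rw [one_mul, Real.norm_of_nonneg (by positivity)]
  · exact (measurable_norm.pow_const _).aestronglyMeasurable

lemma ENNReal.rpow_eq_rpow_sub_one_mul (x : ℝ≥0∞) {s : ℝ} (hs : 1 ≤ s) :
    x ^ s = x ^ (s - 1) * x := by
  simpa using rpow_add_of_nonneg (x := x) (s - 1) 1 (by linarith) zero_le_one

lemma lt_ofReal_div_of_holderConjugate {a b : ℝ} (hb : 0 < b) (hba : b < a) {p q : ℝ≥0∞}
    [p.HolderConjugate q] (hp : ENNReal.ofReal (a / (a - b)) < p) :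
    q < ENNReal.ofReal (a / b) := by
  have hp_inv : p⁻¹ < 1 - ENNReal.ofReal (b / a) := by
    calc p⁻¹ < (ENNReal.ofReal (a / (a - b)))⁻¹ := ENNReal.inv_lt_inv.2 hp
      _ = 1 - ENNReal.ofReal (b / a) := by
        have ha : a ≠ 0 := by linarith
        rw [← ofReal_inv_of_pos (div_pos (by linarith) (by linarith)), inv_div, ← ofReal_one,
          ← ofReal_sub _ (div_nonneg hb.le (by linarith)), sub_div, div_self ha]
  have hq_inv : ENNReal.ofReal (b / a) < q⁻¹ := by
    by_contra! h
    have h' := tsub_le_tsub_left h 1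
    rw [HolderConjugate.one_sub_inv q p] at h'
    exact hp_inv.not_ge h'
  rw [← inv_div, ofReal_inv_of_pos (div_pos hb (by linarith))]
  exact ENNReal.lt_inv_iff_lt_inv.2 hq_inv

section Magma

variable {ι β : Type*} (op : β → β → β) (f : ι → β)

lemma length_magmaLeaves : ∀ w : FreeMagma ι, (magmaLeaves w).length = w.length
  | .of _ => rfl
  | .mul x y => by
    simp only [magmaLeaves, List.length_append, length_magmaLeaves x, length_magmaLeaves y]
    rfl

lemma magmaEval_mem {S : Set β} (hf : ∀ i, f i ∈ S) (hS : ∀ u ∈ S, ∀ v ∈ S, op u v ∈ S) :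
    ∀ w : FreeMagma ι, magmaEval op f w ∈ S
  | .of i => hf i
  | .mul x y => hS _ (magmaEval_mem hf hS x) _ (magmaEval_mem hf hS y)

lemma pow_mul_prod_magmaLeaves_mul (C : ℝ≥0∞) (N : ι → ℝ≥0∞) (x y : FreeMagma ι) :
    (C ^ (x.length - 1) * ((magmaLeaves x).map N).prod) *
        (C ^ (y.length - 1) * ((magmaLeaves y).map N).prod) =
      C ^ ((x * y).length - 2) * ((magmaLeaves (x * y)).map N).prod := by
  have hx := x.length_pos
  have hy := y.length_pos
  rw [show magmaLeaves (x * y) = magmaLeaves x ++ magmaLeaves y from rfl, List.map_append,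
    List.prod_append, show (x * y).length = x.length + y.length from rfl,
    show x.length + y.length - 2 = (x.length - 1) + (y.length - 1) by omega, pow_add]
  ring

lemma magmaEval_le_pow_mul_prod {S : Set β} (N : β → ℝ≥0∞) (C : ℝ≥0∞) (hf : ∀ i, f i ∈ S)
    (hS : ∀ u ∈ S, ∀ v ∈ S, op u v ∈ S)
    (hN : ∀ u ∈ S, ∀ v ∈ S, N (op u v) ≤ C * (N u * N v)) :
    ∀ w : FreeMagma ι,
      N (magmaEval op f w) ≤ C ^ (w.length - 1) * ((magmaLeaves w).map (N ∘ f)).prod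
  | .of i => by simp [magmaEval, magmaLeaves]
  | .mul x y => by
    have hx := x.length_pos
    have hy := y.length_pos
    calc N (magmaEval op f (x * y))
        ≤ C * (N (magmaEval op f x) * N (magmaEval op f y)) :=
          hN _ (magmaEval_mem op f hf hS x) _ (magmaEval_mem op f hf hS y)
      _ ≤ C * ((C ^ (x.length - 1) * ((magmaLeaves x).map (N ∘ f)).prod) *
            (C ^ (y.length - 1) * ((magmaLeaves y).map (N ∘ f)).prod)) := by
          gcongr <;> exact magmaEval_le_pow_mul_prod N C hf hS hN _
      _ = C ^ ((x * y).length - 1) * ((magmaLeaves (x * y)).map (N ∘ f)).prod := by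
          rw [pow_mul_prod_magmaLeaves_mul, ← mul_assoc, ← pow_succ']
          congr 2
          simp only [FreeMagma.length]
          omega

end Magma

section RieszConv

variable {d : ℕ} {α : ℝ} {p p' : ℝ≥0∞} {f g : EuclideanSpace ℝ (Fin d) → ℂ}

lemma aestronglyMeasurable_rieszConv (hf : AEStronglyMeasurable f volume)
    (hg : AEStronglyMeasurable g volume) :
    AEStronglyMeasurable (rieszConv d α f g) volume :=
  ((hf.sub_mul_prod hg).integral_prod_right'.aemeasurable.div
    (Complex.measurable_ofReal.comp (measurable_norm.pow_const α)).aemeasurable)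
    |>.aestronglyMeasurable

lemma enorm_rieszConv_le (ξ : EuclideanSpace ℝ (Fin d)) :
    ‖rieszConv d α f g ξ‖ₑ ≤ normConv volume f g ξ * ENNReal.ofReal (‖ξ‖ ^ (-α)) := by
  have hdenom : ‖(((‖ξ‖ ^ α)⁻¹ : ℝ) : ℂ)‖ₑ = ENNReal.ofReal (‖ξ‖ ^ (-α)) := by
    rw [← ofReal_norm, Complex.norm_real, Real.norm_of_nonneg (by positivity),
      Real.rpow_neg (norm_nonneg ξ)]
  rw [rieszConv, div_eq_mul_inv, enorm_mul, ← Complex.ofReal_inv, hdenom]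
  exact mul_le_mul_left (enorm_integral_le_lintegral_enorm _) _

lemma enorm_rieszConv_le_normConv (hα : 0 ≤ α) {ξ : EuclideanSpace ℝ (Fin d)} (hξ : 1 ≤ ‖ξ‖) :
    ‖rieszConv d α f g ξ‖ₑ ≤ normConv volume f g ξ := by
  have hdecay : ENNReal.ofReal (‖ξ‖ ^ (-α)) ≤ 1 :=
    ofReal_le_one.2 (Real.rpow_le_one_of_one_le_of_nonpos hξ (neg_nonpos.2 hα))
  simpa using (enorm_rieszConv_le ξ).trans (mul_le_mul_right hdecay _)

noncomputable def rieszConst (d : ℕ) (α : ℝ) (r : ℝ≥0∞) : ℝ≥0∞ :=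
  ((∫⁻ ξ in ball (0 : EuclideanSpace ℝ (Fin d)) 1, ENNReal.ofReal (‖ξ‖ ^ (-(α * r.toReal)))) + 1)
    ^ (1 / r.toReal)

lemma one_le_rieszConst {r : ℝ≥0∞} (hr1 : 1 ≤ r) (hr : r ≠ ∞) : 1 ≤ rieszConst d α r :=
  one_le_rpow le_add_self (one_div_pos.2 (toReal_pos (one_pos.trans_le hr1).ne' hr))

lemma rieszConst_lt_top (hα : 0 < α) {r : ℝ≥0∞} (hr : r < ENNReal.ofReal (d / α)) :
    rieszConst d α r < ∞ := by
  have hαr : α * r.toReal < d := by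
    rw [← lt_div_iff₀' hα]
    exact (ENNReal.lt_ofReal_iff_toReal_lt hr.ne_top).1 hr
  have hd : 1 ≤ Module.finrank ℝ (EuclideanSpace ℝ (Fin d)) := by
    rw [finrank_euclideanSpace_fin, Nat.one_le_iff_ne_zero]
    rintro rfl
    exact (mul_nonneg hα.le toReal_nonneg).not_gt (by simpa using hαr)
  refine rpow_lt_top_of_nonneg (by positivity) (add_ne_top.2 ⟨?_, one_ne_top⟩)
  rw [← finrank_euclideanSpace_fin (𝕜 := ℝ) (n := d)] at hαr
  exact (lintegral_ball_ofReal_norm_rpow_neg_lt_top hd hαr 1).ne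

lemma enorm_rieszConv_rpow_le (hα : 0 ≤ α) {s : ℝ} (hs : 1 ≤ s) {M : ℝ≥0∞}
    (hM : ∀ ξ, normConv volume f g ξ ≤ M) (ξ : EuclideanSpace ℝ (Fin d)) :
    ‖rieszConv d α f g ξ‖ₑ ^ s ≤
      M ^ s * (ball 0 1).indicator (fun ξ => ENNReal.ofReal (‖ξ‖ ^ (-(α * s)))) ξ +
        M ^ (s - 1) * normConv volume f g ξ := by
  by_cases hξ : ξ ∈ ball (0 : EuclideanSpace ℝ (Fin d)) 1
  · rw [Set.indicator_of_mem hξ]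
    refine le_add_right ?_
    calc ‖rieszConv d α f g ξ‖ₑ ^ s ≤ (M * ENNReal.ofReal (‖ξ‖ ^ (-α))) ^ s :=
          rpow_le_rpow ((enorm_rieszConv_le ξ).trans (mul_le_mul_left (hM ξ) _)) (by linarith)
      _ = M ^ s * ENNReal.ofReal (‖ξ‖ ^ (-(α * s))) := by
          rw [mul_rpow_of_nonneg _ _ (by linarith), ofReal_rpow_of_nonneg (by positivity)
            (by linarith), ← Real.rpow_mul (norm_nonneg _), neg_mul]
  · rw [Set.indicator_of_notMem hξ, mul_zero, zero_add]
    have hJ := enorm_rieszConv_le_normConv (f := f) (g := g) hα (by simpa using hξ)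
    calc ‖rieszConv d α f g ξ‖ₑ ^ s ≤ normConv volume f g ξ ^ s := rpow_le_rpow hJ (by linarith)
      _ = normConv volume f g ξ ^ (s - 1) * normConv volume f g ξ := rpow_eq_rpow_sub_one_mul _ hs
      _ ≤ M ^ (s - 1) * normConv volume f g ξ :=
          mul_le_mul_left (rpow_le_rpow (hM ξ) (by linarith)) _

lemma eLpNorm_rieszConv_le (hα : 0 ≤ α) {r : ℝ≥0∞} (hr1 : 1 ≤ r) (hr : r ≠ ∞) {M : ℝ≥0∞}
    (hM : ∀ ξ, normConv volume f g ξ ≤ M) (hM_int : ∫⁻ ξ, normConv volume f g ξ ≤ M) :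
    eLpNorm (rieszConv d α f g) r volume ≤ rieszConst d α r * M := by
  rcases eq_top_or_lt_top M with rfl | hM_top
  · rw [mul_top (one_pos.trans_le (one_le_rieszConst hr1 hr)).ne']
    exact le_top
  set s := r.toReal
  have hs : 1 ≤ s := by simpa using toReal_mono hr hr1
  set K := ∫⁻ ξ in ball (0 : EuclideanSpace ℝ (Fin d)) 1, ENNReal.ofReal (‖ξ‖ ^ (-(α * s)))
  have hsing : Measurable fun ξ : EuclideanSpace ℝ (Fin d) => ENNReal.ofReal (‖ξ‖ ^ (-(α * s))) :=
    by fun_prop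
  have hint : ∫⁻ ξ, ‖rieszConv d α f g ξ‖ₑ ^ s ≤ M ^ s * (K + 1) :=
    calc ∫⁻ ξ, ‖rieszConv d α f g ξ‖ₑ ^ s
        ≤ ∫⁻ ξ, (M ^ s * (ball 0 1).indicator (fun ξ => ENNReal.ofReal (‖ξ‖ ^ (-(α * s)))) ξ +
            M ^ (s - 1) * normConv volume f g ξ) :=
          lintegral_mono (enorm_rieszConv_rpow_le hα hs hM)
      _ = M ^ s * K + M ^ (s - 1) * ∫⁻ ξ, normConv volume f g ξ := by
          rw [lintegral_add_left ((hsing.indicator measurableSet_ball).const_mul _),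
            lintegral_const_mul _ (hsing.indicator measurableSet_ball),
            lintegral_indicator measurableSet_ball,
            lintegral_const_mul' _ _ (rpow_ne_top_of_nonneg (by linarith) hM_top.ne)]
      _ ≤ M ^ s * K + M ^ (s - 1) * M := by gcongr
      _ = M ^ s * (K + 1) := by rw [← rpow_eq_rpow_sub_one_mul M hs, mul_add, mul_one]
  rw [eLpNorm_eq_lintegral_rpow_enorm_toReal (one_pos.trans_le hr1).ne' hr, rieszConst, mul_comm]
  calc (∫⁻ ξ, ‖rieszConv d α f g ξ‖ₑ ^ s) ^ (1 / s) ≤ (M ^ s * (K + 1)) ^ (1 / s) :=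
        rpow_le_rpow hint (by positivity)
    _ = M * (K + 1) ^ (1 / s) := by
        rw [mul_rpow_of_nonneg _ _ (by positivity), ← rpow_mul, mul_one_div_cancel (by positivity),
          rpow_one]

lemma eLpNorm_one_le_triNorm : eLpNorm f 1 volume ≤ triNorm d p p' f :=
  le_add_right le_self_add

lemma eLpNorm_le_triNorm : eLpNorm f p volume ≤ triNorm d p p' f :=
  le_add_right le_add_self

lemma eLpNorm_le_triNorm' : eLpNorm f p' volume ≤ triNorm d p p' f :=
  le_add_self

lemma normConv_le_triNorm_mul [p.HolderConjugate p'] (hf : AEStronglyMeasurable f volume)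
    (hg : AEStronglyMeasurable g volume) (ξ : EuclideanSpace ℝ (Fin d)) :
    normConv volume f g ξ ≤ triNorm d p p' f * triNorm d p p' g :=
  (normConv_le_eLpNorm_mul_eLpNorm hf hg ξ).trans
    (mul_le_mul' eLpNorm_le_triNorm eLpNorm_le_triNorm')

lemma lintegral_normConv_le_triNorm_mul (hf : AEStronglyMeasurable f volume)
    (hg : AEStronglyMeasurable g volume) :
    ∫⁻ ξ, normConv volume f g ξ ≤ triNorm d p p' f * triNorm d p p' g :=
  (lintegral_normConv hf hg).trans_le (mul_le_mul' eLpNorm_one_le_triNorm eLpNorm_one_le_triNorm)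

noncomputable def rieszTriConst (d : ℕ) (α : ℝ) (p p' : ℝ≥0∞) : ℝ≥0∞ :=
  rieszConst d α 1 + rieszConst d α p + rieszConst d α p'

lemma triNorm_rieszConv_le (hα : 0 ≤ α) [p.HolderConjugate p'] (hp : p ≠ ∞) (hp' : p' ≠ ∞)
    (hf : AEStronglyMeasurable f volume) (hg : AEStronglyMeasurable g volume) :
    triNorm d p p' (rieszConv d α f g) ≤
      rieszTriConst d α p p' * (triNorm d p p' f * triNorm d p p' g) := by
  have hM := normConv_le_triNorm_mul (p := p) (p' := p') hf hg
  have hM_int := lintegral_normConv_le_triNorm_mul (p := p) (p' := p') hf hg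
  rw [rieszTriConst, add_mul, add_mul]
  exact add_le_add (add_le_add (eLpNorm_rieszConv_le hα le_rfl one_ne_top hM hM_int)
    (eLpNorm_rieszConv_le hα (HolderConjugate.one_le p p') hp hM hM_int))
    (eLpNorm_rieszConv_le hα (HolderConjugate.one_le p' p) hp' hM hM_int)

lemma enorm_rieszConv_le_triNorm_mul (hα : 0 ≤ α) [p.HolderConjugate p']
    (hf : AEStronglyMeasurable f volume) (hg : AEStronglyMeasurable g volume)
    {ξ : EuclideanSpace ℝ (Fin d)} (hξ : 1 ≤ ‖ξ‖) :
    ‖rieszConv d α f g ξ‖ₑ ≤ triNorm d p p' f * triNorm d p p' g :=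
  (enorm_rieszConv_le_normConv hα hξ).trans (normConv_le_triNorm_mul hf hg ξ)

end RieszConv

lemma enorm_magmaEval_rieszConv_le {d : ℕ} {α : ℝ} (hα : 0 ≤ α) {p p' : ℝ≥0∞}
    [p.HolderConjugate p'] (hp : p ≠ ∞) (hp' : p' ≠ ∞) {ι : Type*}
    (f : ι → EuclideanSpace ℝ (Fin d) → ℂ) (hf : ∀ i, AEStronglyMeasurable (f i) volume)
    (x y : FreeMagma ι) {ξ : EuclideanSpace ℝ (Fin d)} (hξ : 1 ≤ ‖ξ‖) :
    ‖magmaEval (rieszConv d α) f (x * y) ξ‖ₑ ≤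
      rieszTriConst d α p p' ^ ((x * y).length - 2) *
        ((magmaLeaves (x * y)).map (triNorm d p p' ∘ f)).prod := by
  set S : Set (EuclideanSpace ℝ (Fin d) → ℂ) := {u | AEStronglyMeasurable u volume}
  have hS : ∀ u ∈ S, ∀ v ∈ S, rieszConv d α u v ∈ S :=
    fun _ hu _ hv => aestronglyMeasurable_rieszConv hu hv
  have hmeas := magmaEval_mem (rieszConv d α) f hf hS
  have hbound := magmaEval_le_pow_mul_prod (rieszConv d α) f (triNorm d p p')
    (rieszTriConst d α p p') hf hS fun _ hu _ hv => triNorm_rieszConv_le hα hp hp' hu hv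
  rw [← pow_mul_prod_magmaLeaves_mul]
  exact (enorm_rieszConv_le_triNorm_mul hα (hmeas x) (hmeas y) hξ).trans
    (mul_le_mul' (hbound x) (hbound y))

theorem riesz_conv_monomial_pointwise_bound_general (d : ℕ) (α : ℝ)
    (hα0 : 0 < α) (hαd : α < d) (p p' : ℝ≥0∞)
    (hp_lb : ENNReal.ofReal ((d : ℝ) / ((d : ℝ) - α)) < p)
    (hp_ub : p < ENNReal.ofReal ((d : ℝ) / α))
    (hpp' : p⁻¹ + p'⁻¹ = 1) :
    ∃ C : ℝ, 0 < C ∧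
      ∀ k : ℕ, 2 ≤ k →
        ∀ f : Fin k → EuclideanSpace ℝ (Fin d) → ℂ,
          (∀ j, MemLp (f j) 1 volume ∧ MemLp (f j) p volume ∧ MemLp (f j) p' volume) →
          ∀ w : FreeMagma (Fin k), (magmaLeaves w).Perm (List.finRange k) →
            ∀ ξ : EuclideanSpace ℝ (Fin d), 1 ≤ ‖ξ‖ →
              ENNReal.ofReal ‖magmaEval (rieszConv d α) f w ξ‖ ≤
                ENNReal.ofReal C ^ (k - 2) * ∏ j, triNorm d p p' (f j) := by
  have : p.HolderConjugate p' := holderConjugate_iff.2 hpp'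
  have hp'_ub := lt_ofReal_div_of_holderConjugate (q := p') hα0 hαd hp_lb
  have h1_ub : 1 < ENNReal.ofReal (d / α) := one_lt_ofReal.2 ((one_lt_div hα0).2 hαd)
  have hC_top : rieszTriConst d α p p' ≠ ∞ := by
    simp only [rieszTriConst, add_ne_top]
    exact ⟨⟨(rieszConst_lt_top hα0 h1_ub).ne, (rieszConst_lt_top hα0 hp_ub).ne⟩,
      (rieszConst_lt_top hα0 hp'_ub).ne⟩
  have hC_pos : rieszTriConst d α p p' ≠ 0 :=
    (one_pos.trans_le ((one_le_rieszConst le_rfl one_ne_top).trans (le_add_right le_self_add))).ne'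
  refine ⟨(rieszTriConst d α p p').toReal, toReal_pos hC_pos hC_top, ?_⟩
  rintro k hk f hf (_ | ⟨x, y⟩) hw ξ hξ
  · have := hw.length_eq
    simp only [magmaLeaves, List.length_singleton, List.length_finRange] at this
    omega
  · have hlen : (x * y).length = k :=
      (length_magmaLeaves (x * y)).symm.trans (hw.length_eq.trans (List.length_finRange))
    have hbound := enorm_magmaEval_rieszConv_le hα0.le hp_ub.ne_top hp'_ub.ne_top f
      (fun j => (hf j).1.aestronglyMeasurable) x y hξ
    rw [hlen] at hbound
    rw [ofReal_toReal hC_top, ofReal_norm, Fin.prod_univ_def, ← (hw.map _).prod_eq]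
    exact hbound

theorem riesz_conv_monomial_pointwise_bound (d : ℕ) (hd : 2 ≤ d) (α : ℝ)
    (hα0 : 0 < α) (hαd : α < d) (p p' : ℝ≥0∞)
    (hp_lb : ENNReal.ofReal ((d : ℝ) / ((d : ℝ) - α)) < p)
    (hp_ub : p < ENNReal.ofReal ((d : ℝ) / α))
    (hpp' : p⁻¹ + p'⁻¹ = 1) :
    ∃ C : ℝ, 0 < C ∧
      ∀ k : ℕ, 2 ≤ k →
        ∀ f : Fin k → EuclideanSpace ℝ (Fin d) → ℂ,
          (∀ j, MemLp (f j) 1 volume ∧ MemLp (f j) p volume ∧ MemLp (f j) p' volume) →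
          ∀ w : FreeMagma (Fin k), (magmaLeaves w).Perm (List.finRange k) →
            ∀ ξ : EuclideanSpace ℝ (Fin d), 1 ≤ ‖ξ‖ →
              ENNReal.ofReal ‖magmaEval (rieszConv d α) f w ξ‖ ≤
                ENNReal.ofReal C ^ (k - 2) * ∏ j, triNorm d p p' (f j) :=
  riesz_conv_monomial_pointwise_bound_general d α hα0 hαd p p' hp_lb hp_ub hpp'
end

section
/- Let d ≥ 1, α > 0, λ > 0, and n₁, n₂ ∈ ℕ, and set r_α := 1/max{2^(α−1), 1}. Let f : ℝ^d × [0,∞) → ℂ^{p×q} and g : ℝ^d × [0,∞) → ℂ^{r×q} be measurable in ξ for each t, and let f⁰, g⁰ : ℝ^d → [0,∞) be measurable functions in L¹(ℝ^d) ∩ L^∞(ℝ^d) such that |f(ξ,t)| ≤ t^{n₁} e^{−λt|ξ|^α} f⁰(ξ) and |g(ξ,t)| ≤ t^{n₂} e^{−λt|ξ|^α} g⁰(ξ) for all (ξ,t) ∈ ℝ^d × [0,∞), where |·| on matrices is the operator norm. Then the tensor convolution (f ∗ g)(ξ,t) := ∫_{ℝ^d} f(ξ−η,t)·g(η,t)^*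 dη satisfies |(f ∗ g)(ξ,t)| ≤ t^{n₁+n₂} e^{−r_α λ t |ξ|^α} (f⁰ ∗ g⁰)(ξ) for all (ξ,t) ∈ ℝ^d × [0,∞). -/
open MeasureTheory

/-!
The operator norm is submultiplicative and invariant under adjoints, so the integrand is bounded
pointwise by the product of the two caloric bounds. The two Gaussian-type factors combine through
the quasi-triangle inequality `‖ξ‖ ^ α ≤ max (2 ^ (α - 1)) 1 * (‖ξ - η‖ ^ α + ‖η‖ ^ α)`, which for
`α ≤ 1` is subadditivity of `x ↦ x ^ α` and for `α ≥ 1` is convexity. Integrability of the majorant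
`f⁰(ξ - ·) g⁰` comes from `f⁰ ∈ L¹` and `g⁰ ∈ L^∞`.
-/

theorem Real.add_rpow_le_max_two_rpow_mul_add_rpow {a b α : ℝ} (ha : 0 ≤ a) (hb : 0 ≤ b)
    (hα : 0 ≤ α) : (a + b) ^ α ≤ max ((2 : ℝ) ^ (α - 1)) 1 * (a ^ α + b ^ α) := by
  lift a to NNReal using ha
  lift b to NNReal using hb
  have hsum : (0 : ℝ) ≤ (a : ℝ) ^ α + (b : ℝ) ^ α := by positivity
  rcases le_total α 1 with hα1 | hα1
  · calc ((a : ℝ) + b) ^ α ≤ (a : ℝ) ^ α + (b : ℝ) ^ α := by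
          exact_mod_cast NNReal.rpow_add_le_add_rpow a b hα hα1
      _ ≤ _ := le_mul_of_one_le_left hsum (le_max_right _ _)
  · calc ((a : ℝ) + b) ^ α ≤ 2 ^ (α - 1) * ((a : ℝ) ^ α + (b : ℝ) ^ α) := by
          exact_mod_cast NNReal.rpow_add_le_mul_rpow_add_rpow a b hα1
      _ ≤ _ := mul_le_mul_of_nonneg_right (le_max_left _ _) hsum

theorem one_div_max_two_rpow_mul_norm_rpow_le {E : Type*} [SeminormedAddCommGroup E] {α : ℝ}
    (hα : 0 ≤ α) (ξ η : E) :
    1 / max ((2 : ℝ) ^ (α - 1)) 1 * ‖ξ‖ ^ α ≤ ‖ξ - η‖ ^ α + ‖η‖ ^ α := by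
  rw [one_div_mul_eq_div, div_le_iff₀' (lt_max_of_lt_right one_pos)]
  calc ‖ξ‖ ^ α ≤ (‖ξ - η‖ + ‖η‖) ^ α :=
        Real.rpow_le_rpow (norm_nonneg _) (norm_le_norm_sub_add ξ η) hα
    _ ≤ _ := Real.add_rpow_le_max_two_rpow_mul_add_rpow (norm_nonneg _) (norm_nonneg _) hα

theorem exp_neg_mul_norm_sub_rpow_mul_exp_neg_mul_norm_rpow_le {E : Type*}
    [SeminormedAddCommGroup E] {α s : ℝ} (hα : 0 ≤ α) (hs : 0 ≤ s) (ξ η : E) :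
    Real.exp (-(s * ‖ξ - η‖ ^ α)) * Real.exp (-(s * ‖η‖ ^ α)) ≤
      Real.exp (-(1 / max ((2 : ℝ) ^ (α - 1)) 1 * s * ‖ξ‖ ^ α)) := by
  rw [← Real.exp_add, Real.exp_le_exp]
  nlinarith [mul_le_mul_of_nonneg_left (one_div_max_two_rpow_mul_norm_rpow_le hα ξ η) hs]

theorem ContinuousLinearMap.norm_comp_adjoint_le {𝕜 E F G : Type*} [RCLike 𝕜]
    [NormedAddCommGroup E] [InnerProductSpace 𝕜 E] [CompleteSpace E]
    [NormedAddCommGroup F] [InnerProductSpace 𝕜 F] [CompleteSpace F]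
    [NormedAddCommGroup G] [NormedSpace 𝕜 G] (A : E →L[𝕜] G) (B : E →L[𝕜] F) :
    ‖A.comp (adjoint B)‖ ≤ ‖A‖ * ‖B‖ :=
  (A.opNorm_comp_le _).trans_eq (by rw [adjoint.norm_map])

theorem tensor_convolution_caloric_bound_general (d p q r : ℕ)
    (α lam : ℝ) (hα : 0 < α) (hlam : 0 < lam) (n₁ n₂ : ℕ)
    (f : EuclideanSpace ℝ (Fin d) → ℝ →
      (EuclideanSpace ℂ (Fin q) →L[ℂ] EuclideanSpace ℂ (Fin p)))
    (g : EuclideanSpace ℝ (Fin d) → ℝ →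
      (EuclideanSpace ℂ (Fin q) →L[ℂ] EuclideanSpace ℂ (Fin r)))
    (f0 g0 : EuclideanSpace ℝ (Fin d) → ℝ)
    (hf0nonneg : ∀ ξ, 0 ≤ f0 ξ) (hg0nonneg : ∀ ξ, 0 ≤ g0 ξ)
    (hf0L1 : MemLp f0 1 volume) (hg0Linf : MemLp g0 ⊤ volume)
    (hfbound : ∀ ξ, ∀ t : ℝ, 0 ≤ t →
      ‖f ξ t‖ ≤ t ^ n₁ * Real.exp (-(lam * t * ‖ξ‖ ^ α)) * f0 ξ)
    (hgbound : ∀ ξ, ∀ t : ℝ, 0 ≤ t →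
      ‖g ξ t‖ ≤ t ^ n₂ * Real.exp (-(lam * t * ‖ξ‖ ^ α)) * g0 ξ) :
    ∀ ξ, ∀ t : ℝ, 0 ≤ t →
      ‖∫ η, (f (ξ - η) t).comp (ContinuousLinearMap.adjoint (g η t))‖ ≤
        t ^ (n₁ + n₂) *
          Real.exp (-((1 / max ((2 : ℝ) ^ (α - 1)) 1) * lam * t * ‖ξ‖ ^ α)) *
          ∫ η, f0 (ξ - η) * g0 η := by
  intro ξ t ht
  have hint : Integrable (fun η => f0 (ξ - η) * g0 η) :=
    ((memLp_one_iff_integrable.mp hf0L1).comp_sub_left ξ).mul_of_top_left hg0Linf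
  have hexp := exp_neg_mul_norm_sub_rpow_mul_exp_neg_mul_norm_rpow_le hα.le
    (mul_nonneg hlam.le ht) ξ
  simp only [← mul_assoc] at hexp
  rw [← integral_const_mul]
  refine norm_integral_le_of_norm_le (hint.const_mul _) (.of_forall fun η => ?_)
  calc ‖(f (ξ - η) t).comp (ContinuousLinearMap.adjoint (g η t))‖
      ≤ ‖f (ξ - η) t‖ * ‖g η t‖ := ContinuousLinearMap.norm_comp_adjoint_le _ _
    _ ≤ (t ^ n₁ * Real.exp (-(lam * t * ‖ξ - η‖ ^ α)) * f0 (ξ - η)) *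
          (t ^ n₂ * Real.exp (-(lam * t * ‖η‖ ^ α)) * g0 η) :=
        mul_le_mul (hfbound _ t ht) (hgbound η t ht) (norm_nonneg _)
          (by have := hf0nonneg (ξ - η); positivity)
    _ = t ^ (n₁ + n₂) * (Real.exp (-(lam * t * ‖ξ - η‖ ^ α)) *
          Real.exp (-(lam * t * ‖η‖ ^ α))) * (f0 (ξ - η) * g0 η) := by ring
    _ ≤ _ := by
        gcongr
        · exact mul_nonneg (hf0nonneg _) (hg0nonneg _)
        · exact hexp η

theorem tensor_convolution_caloric_bound (d p q r : ℕ) (hd : 1 ≤ d)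
    (α lam : ℝ) (hα : 0 < α) (hlam : 0 < lam) (n₁ n₂ : ℕ)
    (f : EuclideanSpace ℝ (Fin d) → ℝ →
      (EuclideanSpace ℂ (Fin q) →L[ℂ] EuclideanSpace ℂ (Fin p)))
    (g : EuclideanSpace ℝ (Fin d) → ℝ →
      (EuclideanSpace ℂ (Fin q) →L[ℂ] EuclideanSpace ℂ (Fin r)))
    (f0 g0 : EuclideanSpace ℝ (Fin d) → ℝ)
    (hf0meas : Measurable f0) (hg0meas : Measurable g0)
    (hf0nonneg : ∀ ξ, 0 ≤ f0 ξ) (hg0nonneg : ∀ ξ, 0 ≤ g0 ξ)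
    (hf0L1 : MemLp f0 1 volume) (hf0Linf : MemLp f0 ⊤ volume)
    (hg0L1 : MemLp g0 1 volume) (hg0Linf : MemLp g0 ⊤ volume)
    (hfmeas : ∀ t : ℝ, 0 ≤ t → StronglyMeasurable fun ξ => f ξ t)
    (hgmeas : ∀ t : ℝ, 0 ≤ t → StronglyMeasurable fun ξ => g ξ t)
    (hfbound : ∀ ξ, ∀ t : ℝ, 0 ≤ t →
      ‖f ξ t‖ ≤ t ^ n₁ * Real.exp (-(lam * t * ‖ξ‖ ^ α)) * f0 ξ)
    (hgbound : ∀ ξ, ∀ t : ℝ, 0 ≤ t →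
      ‖g ξ t‖ ≤ t ^ n₂ * Real.exp (-(lam * t * ‖ξ‖ ^ α)) * g0 ξ) :
    ∀ ξ, ∀ t : ℝ, 0 ≤ t →
      ‖∫ η, (f (ξ - η) t).comp (ContinuousLinearMap.adjoint (g η t))‖ ≤
        t ^ (n₁ + n₂) *
          Real.exp (-((1 / max ((2 : ℝ) ^ (α - 1)) 1) * lam * t * ‖ξ‖ ^ α)) *
          ∫ η, f0 (ξ - η) * g0 η :=
  tensor_convolution_caloric_bound_general d p q r α lam hα hlam n₁ n₂ f g f0 g0 hf0nonneg hg0nonneg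
    hf0L1 hg0Linf hfbound hgbound
end

section
/- Let d ≥ 1, ν > 0, n₁, n₂ ∈ ℕ, and 0 < β ≤ 4π²ν. Let K : ℝ^d → ℂ^{d×d} be measurable with operator norm ‖K(ξ)‖ ≤ 1 for all ξ. Let f, g : ℝ^d × [0,∞) → ℂ^d be measurable in ξ for each t, and let f⁰, g⁰ : ℝ^d → [0,∞) be measurable functions in L¹(ℝ^d) ∩ L^∞(ℝ^d) such that |f(ξ,t)| ≤ t^{n₁} e^{−βt|ξ|²} f⁰(ξ) and |g(ξ,t)| ≤ t^{n₂} e^{−βt|ξ|²} g⁰(ξ) for all (ξ,t). Define (f ⊙ g)(ξ,t) := 2πi K(ξ) [ ∫₀ᵗ e^{−4π²ν(t−s)|ξ|²} (f ∗ g)(ξ,s) ds ] ξ, where (f ∗ g)(ξ,s) := ∫_{ℝ^d} f(ξ−η,s) g(η,s)^* dη. Then for every t ≥ 0 and every ξ ∈ ℝ^d with ξ ≠ 0, |(f ⊙ g)(ξ,t)| ≤ (t^{n₁+n₂}/(πν)) · e^{−(β/2) t |ξ|²} · (f⁰ ∗ g⁰)(ξ)/|ξ|. -/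
/-!
At time `s` the pointwise bounds give
`‖f (ξ - η) s‖ ‖g η s‖ ≤ s ^ (n₁ + n₂) e^{-βs(‖ξ - η‖² + ‖η‖²)} f⁰ (ξ - η) g⁰ η`, and
`‖ξ‖² ≤ 2 (‖ξ - η‖² + ‖η‖²)` turns the Gaussian factor into `e^{-(β/2) s ‖ξ‖²}`, uniformly in `η`.
Since `β / 2 ≤ 2π²ν`, half of the heat factor `e^{-4π²ν(t-s)‖ξ‖²}` upgrades `e^{-(β/2) s ‖ξ‖²}` to
`e^{-(β/2) t ‖ξ‖²}`, while the other half integrates over `s ∈ [0, t]` to at most `1 / (2π²ν‖ξ‖²)`.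
The outer factors `2π` and `ξ` then contribute `2π‖ξ‖`.
-/

open MeasureTheory Real

lemma exp_neg_norm_sub_sq_mul_exp_neg_norm_sq_le {V : Type*} [NormedAddCommGroup V] {c : ℝ}
    (hc : 0 ≤ c) (x y : V) :
    exp (-(c * ‖x - y‖ ^ 2)) * exp (-(c * ‖y‖ ^ 2)) ≤ exp (-(c / 2 * ‖x‖ ^ 2)) := by
  have hsq : ‖x‖ ^ 2 ≤ 2 * (‖x - y‖ ^ 2 + ‖y‖ ^ 2) :=
    (pow_le_pow_left₀ (norm_nonneg x) (norm_le_norm_sub_add x y) 2).trans add_sq_le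
  rw [← exp_add, exp_le_exp]
  nlinarith

lemma norm_integral_innerSL_smulRight_le {V W : Type*} [NormedAddCommGroup V] [MeasurableSpace V]
    {μ : Measure V} [NormedAddCommGroup W] [InnerProductSpace ℂ W]
    {f g : V → W} {f0 g0 : V → ℝ} {a b c : ℝ} (ξ : V) (ha : 0 ≤ a) (hb : 0 ≤ b) (hc : 0 ≤ c)
    (hf0 : ∀ η, 0 ≤ f0 η) (hg0 : ∀ η, 0 ≤ g0 η)
    (hf : ∀ η, ‖f η‖ ≤ a * exp (-(c * ‖η‖ ^ 2)) * f0 η)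
    (hg : ∀ η, ‖g η‖ ≤ b * exp (-(c * ‖η‖ ^ 2)) * g0 η)
    (hint : Integrable (fun η => f0 (ξ - η) * g0 η) μ) :
    ‖∫ η, (innerSL ℂ (g η)).smulRight (f (ξ - η)) ∂μ‖ ≤
      a * b * exp (-(c / 2 * ‖ξ‖ ^ 2)) * ∫ η, f0 (ξ - η) * g0 η ∂μ := by
  rw [← integral_const_mul]
  refine norm_integral_le_of_norm_le (hint.const_mul _) (ae_of_all _ fun η => ?_)
  rw [ContinuousLinearMap.norm_smulRight_apply, innerSL_apply_norm]
  calc ‖g η‖ * ‖f (ξ - η)‖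
      ≤ (b * exp (-(c * ‖η‖ ^ 2)) * g0 η) * (a * exp (-(c * ‖ξ - η‖ ^ 2)) * f0 (ξ - η)) :=
        mul_le_mul (hg η) (hf _) (norm_nonneg _) ((norm_nonneg _).trans (hg η))
    _ = a * b * (exp (-(c * ‖ξ - η‖ ^ 2)) * exp (-(c * ‖η‖ ^ 2))) * (f0 (ξ - η) * g0 η) := by
        ring
    _ ≤ a * b * exp (-(c / 2 * ‖ξ‖ ^ 2)) * (f0 (ξ - η) * g0 η) :=
        mul_le_mul_of_nonneg_right
          (mul_le_mul_of_nonneg_left (exp_neg_norm_sub_sq_mul_exp_neg_norm_sq_le hc ξ η)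
            (mul_nonneg ha hb))
          (mul_nonneg (hf0 _) (hg0 _))

lemma integral_exp_neg_mul_sub_le {c t : ℝ} (hc : 0 < c) :
    ∫ s in (0 : ℝ)..t, exp (-(c * (t - s))) ≤ 1 / c := by
  have hderiv (s : ℝ) :
      HasDerivAt (fun u => exp (-(c * (t - u))) / c) (exp (-(c * (t - s)))) s := by
    have h : HasDerivAt (fun u => -(c * (t - u))) (-(c * -1)) s :=
      (((hasDerivAt_id s).const_sub t).const_mul c).neg
    simpa [hc.ne'] using h.exp.div_const c
  rw [intervalIntegral.integral_eq_sub_of_hasDerivAt (fun s _ => hderiv s)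
    ((by fun_prop : Continuous _).intervalIntegrable _ _)]
  simp only [sub_self, mul_zero, neg_zero, exp_zero, div_sub_div_same]
  gcongr
  linarith [exp_pos (-(c * (t - 0)))]

lemma norm_integral_exp_neg_mul_sub_smul_le {E : Type*} [NormedAddCommGroup E] [NormedSpace ℝ E]
    {F : ℝ → E} {a b M t : ℝ} (ha : 0 < a) (hb : b ≤ a / 2) (hM : 0 ≤ M) (ht : 0 ≤ t)
    (hF : ∀ s ∈ Set.Ioc 0 t, ‖F s‖ ≤ M * exp (-(b * s))) :
    ‖∫ s in (0 : ℝ)..t, exp (-(a * (t - s))) • F s‖ ≤ 2 * M * exp (-(b * t)) / a := by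
  have hpt : ∀ s ∈ Set.Ioc 0 t,
      ‖exp (-(a * (t - s))) • F s‖ ≤ M * exp (-(b * t)) * exp (-(a / 2 * (t - s))) := by
    intro s hs
    rw [norm_smul, norm_of_nonneg (exp_pos _).le]
    calc exp (-(a * (t - s))) * ‖F s‖ ≤ exp (-(a * (t - s))) * (M * exp (-(b * s))) := by
          gcongr; exact hF s hs
      _ = M * exp (-(a * (t - s)) + -(b * s)) := by rw [exp_add]; ring
      _ ≤ M * exp (-(b * t) + -(a / 2 * (t - s))) := by
          gcongr M * exp ?_
          nlinarith [mul_nonneg (sub_nonneg.2 hb) (sub_nonneg.2 hs.2)]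
      _ = M * exp (-(b * t)) * exp (-(a / 2 * (t - s))) := by rw [exp_add]; ring
  calc _ ≤ ∫ s in (0 : ℝ)..t, M * exp (-(b * t)) * exp (-(a / 2 * (t - s))) :=
        intervalIntegral.norm_integral_le_of_norm_le ht (ae_of_all _ hpt)
          ((by fun_prop : Continuous _).intervalIntegrable _ _)
    _ = M * exp (-(b * t)) * ∫ s in (0 : ℝ)..t, exp (-(a / 2 * (t - s))) :=
        intervalIntegral.integral_const_mul _ _
    _ ≤ M * exp (-(b * t)) * (1 / (a / 2)) := by
        gcongr
        exact integral_exp_neg_mul_sub_le (half_pos ha)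
    _ = 2 * M * exp (-(b * t)) / a := by field_simp

lemma EuclideanSpace.norm_equiv_symm_ofReal {ι : Type*} [Fintype ι] (x : EuclideanSpace ℝ ι) :
    ‖(WithLp.equiv 2 (ι → ℂ)).symm fun j => ((x j : ℝ) : ℂ)‖ = ‖x‖ := by
  simp [EuclideanSpace.norm_eq]

lemma norm_smul_apply_apply_le {𝕜 E F G : Type*} [NontriviallyNormedField 𝕜]
    [NormedAddCommGroup E] [NormedSpace 𝕜 E] [NormedAddCommGroup F] [NormedSpace 𝕜 F]
    [NormedAddCommGroup G] [NormedSpace 𝕜 G] (c : 𝕜) {L : F →L[𝕜] G} (hL : ‖L‖ ≤ 1)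
    (A : E →L[𝕜] F) (v : E) :
    ‖c • L (A v)‖ ≤ ‖c‖ * (‖A‖ * ‖v‖) := by
  rw [norm_smul]
  gcongr
  calc ‖L (A v)‖ ≤ 1 * ‖A v‖ := L.le_of_opNorm_le hL _
    _ ≤ ‖A‖ * ‖v‖ := by rw [one_mul]; exact A.le_opNorm _

theorem odot_product_caloric_bound_general (d : ℕ) (ν : ℝ) (hν : 0 < ν)
    (n₁ n₂ : ℕ) (β : ℝ) (hβ0 : 0 < β) (hβ : β ≤ 4 * Real.pi ^ 2 * ν)
    (K : EuclideanSpace ℝ (Fin d) →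
      (EuclideanSpace ℂ (Fin d) →L[ℂ] EuclideanSpace ℂ (Fin d)))
    (hK : ∀ ξ, ‖K ξ‖ ≤ 1)
    (f g : EuclideanSpace ℝ (Fin d) → ℝ → EuclideanSpace ℂ (Fin d))
    (f0 g0 : EuclideanSpace ℝ (Fin d) → ℝ)
    (hf0nonneg : ∀ ξ, 0 ≤ f0 ξ) (hg0nonneg : ∀ ξ, 0 ≤ g0 ξ)
    (hf0L1 : MemLp f0 1 volume) (hg0Linf : MemLp g0 ⊤ volume)
    (hfbound : ∀ ξ, ∀ t : ℝ, 0 ≤ t →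
      ‖f ξ t‖ ≤ t ^ n₁ * Real.exp (-(β * t * ‖ξ‖ ^ 2)) * f0 ξ)
    (hgbound : ∀ ξ, ∀ t : ℝ, 0 ≤ t →
      ‖g ξ t‖ ≤ t ^ n₂ * Real.exp (-(β * t * ‖ξ‖ ^ 2)) * g0 ξ) :
    ∀ t : ℝ, 0 ≤ t → ∀ ξ : EuclideanSpace ℝ (Fin d), ξ ≠ 0 →
      ‖((2 * Real.pi : ℂ) * Complex.I) •
          (K ξ) ((∫ s in (0 : ℝ)..t,
              Real.exp (-(4 * Real.pi ^ 2 * ν * (t - s) * ‖ξ‖ ^ 2)) •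
                ∫ η, (innerSL ℂ (g η s)).smulRight (f (ξ - η) s))
            ((WithLp.equiv 2 (Fin d → ℂ)).symm fun j => ((ξ j : ℝ) : ℂ)))‖ ≤
        t ^ (n₁ + n₂) / (Real.pi * ν) * Real.exp (-(β / 2 * t * ‖ξ‖ ^ 2)) *
          ((∫ η, f0 (ξ - η) * g0 η) / ‖ξ‖) := by
  intro t ht ξ hξ
  have hξpos : 0 < ‖ξ‖ := norm_pos_iff.mpr hξ
  set C := ∫ η, f0 (ξ - η) * g0 η
  have hint : Integrable (fun η => f0 (ξ - η) * g0 η) :=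
    ((integrable_comp_sub_left f0 ξ).mpr (memLp_one_iff_integrable.mp hf0L1)).mul_of_top_left
      hg0Linf
  have hC0 : 0 ≤ C := integral_nonneg fun η => mul_nonneg (hf0nonneg _) (hg0nonneg _)
  have hconv : ∀ s ∈ Set.Ioc 0 t, ‖∫ η, (innerSL ℂ (g η s)).smulRight (f (ξ - η) s)‖ ≤
      t ^ (n₁ + n₂) * C * exp (-(β / 2 * ‖ξ‖ ^ 2 * s)) := by
    intro s ⟨hs0, hst⟩
    calc _ ≤ s ^ n₁ * s ^ n₂ * exp (-(β * s / 2 * ‖ξ‖ ^ 2)) * C :=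
          norm_integral_innerSL_smulRight_le ξ (by positivity) (by positivity) (by positivity)
            hf0nonneg hg0nonneg (fun η => hfbound η s hs0.le) (fun η => hgbound η s hs0.le)
            hint
      _ ≤ t ^ (n₁ + n₂) * C * exp (-(β / 2 * ‖ξ‖ ^ 2 * s)) := by
        rw [← pow_add, mul_right_comm _ C, mul_div_right_comm, mul_right_comm (β / 2)]
        gcongr
  have hduhamel := norm_integral_exp_neg_mul_sub_smul_le (a := 4 * π ^ 2 * ν * ‖ξ‖ ^ 2)
    (by positivity) (by nlinarith [sq_nonneg ‖ξ‖]) (by positivity) ht hconv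
  set A := ∫ s in (0 : ℝ)..t, exp (-(4 * π ^ 2 * ν * (t - s) * ‖ξ‖ ^ 2)) •
    ∫ η, (innerSL ℂ (g η s)).smulRight (f (ξ - η) s)
  have hA : ‖A‖ ≤
      2 * (t ^ (n₁ + n₂) * C) * exp (-(β / 2 * ‖ξ‖ ^ 2 * t)) / (4 * π ^ 2 * ν * ‖ξ‖ ^ 2) := by
    simpa only [A, mul_right_comm _ (‖ξ‖ ^ 2) (t - _)] using hduhamel
  have hscalar : ‖((2 * π : ℂ) * Complex.I)‖ = 2 * π := by
    simp [Complex.norm_real, abs_of_nonneg pi_nonneg]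
  calc _ ≤ ‖((2 * π : ℂ) * Complex.I)‖ * (‖A‖ * ‖ξ‖) :=
        (norm_smul_apply_apply_le _ (hK ξ) A _).trans_eq
          (by rw [EuclideanSpace.norm_equiv_symm_ofReal])
    _ ≤ 2 * π * (2 * (t ^ (n₁ + n₂) * C) * exp (-(β / 2 * ‖ξ‖ ^ 2 * t)) /
          (4 * π ^ 2 * ν * ‖ξ‖ ^ 2) * ‖ξ‖) := by
        rw [hscalar]
        gcongr
    _ = _ := by
        field_simp
        ring_nf

theorem odot_product_caloric_bound (d : ℕ) (hd : 1 ≤ d) (ν : ℝ) (hν : 0 < ν)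
    (n₁ n₂ : ℕ) (β : ℝ) (hβ0 : 0 < β) (hβ : β ≤ 4 * Real.pi ^ 2 * ν)
    (K : EuclideanSpace ℝ (Fin d) →
      (EuclideanSpace ℂ (Fin d) →L[ℂ] EuclideanSpace ℂ (Fin d)))
    (hK : ∀ ξ, ‖K ξ‖ ≤ 1)
    (f g : EuclideanSpace ℝ (Fin d) → ℝ → EuclideanSpace ℂ (Fin d))
    (f0 g0 : EuclideanSpace ℝ (Fin d) → ℝ)
    (hf0meas : Measurable f0) (hg0meas : Measurable g0)
    (hf0nonneg : ∀ ξ, 0 ≤ f0 ξ) (hg0nonneg : ∀ ξ, 0 ≤ g0 ξ)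
    (hf0L1 : MemLp f0 1 volume) (hf0Linf : MemLp f0 ⊤ volume)
    (hg0L1 : MemLp g0 1 volume) (hg0Linf : MemLp g0 ⊤ volume)
    (hfmeas : ∀ t : ℝ, 0 ≤ t → StronglyMeasurable fun ξ => f ξ t)
    (hgmeas : ∀ t : ℝ, 0 ≤ t → StronglyMeasurable fun ξ => g ξ t)
    (hfbound : ∀ ξ, ∀ t : ℝ, 0 ≤ t →
      ‖f ξ t‖ ≤ t ^ n₁ * Real.exp (-(β * t * ‖ξ‖ ^ 2)) * f0 ξ)
    (hgbound : ∀ ξ, ∀ t : ℝ, 0 ≤ t →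
      ‖g ξ t‖ ≤ t ^ n₂ * Real.exp (-(β * t * ‖ξ‖ ^ 2)) * g0 ξ) :
    ∀ t : ℝ, 0 ≤ t → ∀ ξ : EuclideanSpace ℝ (Fin d), ξ ≠ 0 →
      ‖((2 * Real.pi : ℂ) * Complex.I) •
          (K ξ) ((∫ s in (0 : ℝ)..t,
              Real.exp (-(4 * Real.pi ^ 2 * ν * (t - s) * ‖ξ‖ ^ 2)) •
                ∫ η, (innerSL ℂ (g η s)).smulRight (f (ξ - η) s))
            ((WithLp.equiv 2 (Fin d → ℂ)).symm fun j => ((ξ j : ℝ) : ℂ)))‖ ≤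
        t ^ (n₁ + n₂) / (Real.pi * ν) * Real.exp (-(β / 2 * t * ‖ξ‖ ^ 2)) *
          ((∫ η, f0 (ξ - η) * g0 η) / ‖ξ‖) :=
  odot_product_caloric_bound_general d ν hν n₁ n₂ β hβ0 hβ K hK f g f0 g0 hf0nonneg hg0nonneg hf0L1
    hg0Linf hfbound hgbound
end
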